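/- arXiv:math/0606685 — 7 statements merged into one kernel-verified Lean document; each statement's English description precedes it below -/
import Mathlib

section
/- Let 1 < α < 2. Then γ(α,δ) ≥ 0 for every δ ∈ (0,1) ∪ (α, α+1), and γ(α,δ) ≤ 0 for every δ ∈ [1, α). -/
open MeasureTheory Set

/-- The coefficient `γ(α,p)` of the fractional Laplacian acting on power functions:
`γ(α,p) = ((p-1)/α) ∫₀^∞ v^{p-2} (|v-1|^{α-p} - (v+1)^{α-p}) dv` for `p ≠ 1`, and
`γ(α,1) = (1/α) ∫₀^∞ v⁻¹ (|v-1|^{α-1} - (v+1)^{α-1}) dv`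
(note `v ^ ((1:ℝ) - 2) = v⁻¹` for `v > 0`). -/
noncomputable def gammaCoef (α p : ℝ) : ℝ :=
  (if p = 1 then 1 / α else (p - 1) / α) *
    ∫ v in Ioi (0 : ℝ), v ^ (p - 2) * (|v - 1| ^ (α - p) - (v + 1) ^ (α - p))

lemma int_nonpos (α δ : ℝ) (h : δ ≤ α) :
    (∫ v in Ioi (0 : ℝ), v ^ (δ - 2) * (|v - 1| ^ (α - δ) - (v + 1) ^ (α - δ))) ≤ 0 := by
  apply integral_nonpos_of_ae
  filter_upwards [ae_restrict_mem measurableSet_Ioi] with v hv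
  have hv0 : (0:ℝ) < v := hv
  have habs : |v - 1| ≤ v + 1 := abs_le.mpr ⟨by linarith, by linarith⟩
  have hle : |v - 1| ^ (α - δ) ≤ (v + 1) ^ (α - δ) :=
    Real.rpow_le_rpow (abs_nonneg _) habs (by linarith)
  exact mul_nonpos_iff.mpr (Or.inl ⟨Real.rpow_nonneg hv0.le _, by linarith⟩)

lemma int_nonneg (α δ : ℝ) (h : α ≤ δ) :
    0 ≤ ∫ v in Ioi (0 : ℝ), v ^ (δ - 2) * (|v - 1| ^ (α - δ) - (v + 1) ^ (α - δ)) := by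
  apply integral_nonneg_of_ae
  have hne : ∀ᵐ v : ℝ ∂volume, v ≠ 1 :=
    compl_mem_ae_iff.mpr (measure_mono_null (fun x hx => Set.mem_singleton_iff.mpr (show x = 1 from hx)) (measure_singleton (1:ℝ)))
  filter_upwards [ae_restrict_mem measurableSet_Ioi, ae_restrict_of_ae hne] with v hv hv1
  have hv0 : (0:ℝ) < v := hv
  have habs0 : (0:ℝ) < |v - 1| := abs_pos.mpr (sub_ne_zero.mpr hv1)
  have habs : |v - 1| ≤ v + 1 := abs_le.mpr ⟨by linarith, by linarith⟩
  have hle : (v + 1) ^ (α - δ) ≤ |v - 1| ^ (α - δ) :=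
    Real.rpow_le_rpow_of_nonpos habs0 habs (by linarith)
  exact mul_nonneg (Real.rpow_nonneg hv0.le _) (by linarith)

/-- For `1 < α < 2`, `γ(α,δ) ≥ 0` for all `δ ∈ (0,1) ∪ (α, α+1)` and
`γ(α,δ) ≤ 0` for all `δ ∈ [1, α)`. -/
theorem stmt4 (α : ℝ) (hα1 : 1 < α) (hα2 : α < 2) :
    (∀ δ : ℝ, δ ∈ Ioo (0 : ℝ) 1 ∪ Ioo α (α + 1) → 0 ≤ gammaCoef α δ) ∧
    (∀ δ : ℝ, δ ∈ Ico (1 : ℝ) α → gammaCoef α δ ≤ 0) := by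
  constructor
  · rintro δ (⟨hd0, hd1⟩ | ⟨hd0, hd1⟩)
    · rw [gammaCoef, if_neg (by linarith)]
      exact mul_nonneg_iff.mpr (Or.inr
        ⟨div_nonpos_iff.mpr (Or.inr ⟨by linarith, by linarith⟩), int_nonpos α δ (by linarith)⟩)
    · rw [gammaCoef, if_neg (by linarith)]
      exact mul_nonneg (div_nonneg (by linarith) (by linarith)) (int_nonneg α δ hd0.le)
  · rintro δ ⟨hd0, hd1⟩
    rw [gammaCoef]
    split_ifs with h
    · exact mul_nonpos_iff.mpr (Or.inl ⟨by positivity, int_nonpos α δ (by linarith)⟩)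
    · exact mul_nonpos_iff.mpr (Or.inl ⟨div_nonneg (by linarith) (by linarith),
        int_nonpos α δ hd1.le⟩)
end

section
/- Let 0 < α < 1. Then γ(α,δ) ≥ 0 for every δ ∈ (0, α) ∪ [1, α+1), and γ(α,δ) ≤ 0 for every δ ∈ (α, 1). -/
/-! Both signs come from `|v - 1| ≤ v + 1` for `v ≥ 0`: the integrand of `γ(α,p)` has the sign
of `p - α`, and the prefactor the sign of `p - 1`. No integrability is needed, since the
junk value `0` of a non-integrable integral has both signs. -/

open MeasureTheory Set

section Integrand

variable {v q s : ℝ}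

lemma abs_sub_one_le_add_one (hv : 0 ≤ v) : |v - 1| ≤ v + 1 :=
  abs_le.mpr ⟨by linarith, by linarith⟩

lemma rpow_mul_abs_sub_one_rpow_sub_nonneg (hv : 0 ≤ v) (hv1 : v ≠ 1) (hs : s ≤ 0) :
    0 ≤ v ^ q * (|v - 1| ^ s - (v + 1) ^ s) := by
  have hpos : 0 < |v - 1| := abs_pos.mpr (sub_ne_zero.mpr hv1)
  exact mul_nonneg (Real.rpow_nonneg hv q)
    (sub_nonneg.mpr (Real.rpow_le_rpow_of_nonpos hpos (abs_sub_one_le_add_one hv) hs))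

lemma rpow_mul_abs_sub_one_rpow_sub_nonpos (hv : 0 ≤ v) (hs : 0 ≤ s) :
    v ^ q * (|v - 1| ^ s - (v + 1) ^ s) ≤ 0 :=
  mul_nonpos_of_nonneg_of_nonpos (Real.rpow_nonneg hv q)
    (sub_nonpos.mpr (Real.rpow_le_rpow (abs_nonneg _) (abs_sub_one_le_add_one hv) hs))

lemma setIntegral_rpow_mul_abs_sub_one_rpow_sub_nonneg (q : ℝ) (hs : s ≤ 0) :
    0 ≤ ∫ v in Ioi (0 : ℝ), v ^ q * (|v - 1| ^ s - (v + 1) ^ s) := by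
  refine setIntegral_nonneg_of_ae_restrict ?_
  rw [Filter.EventuallyLE, ae_restrict_iff' measurableSet_Ioi]
  filter_upwards [Measure.ae_ne volume (1 : ℝ)] with v hv1 hv
  exact rpow_mul_abs_sub_one_rpow_sub_nonneg (le_of_lt hv) hv1 hs

lemma setIntegral_rpow_mul_abs_sub_one_rpow_sub_nonpos (q : ℝ) (hs : 0 ≤ s) :
    ∫ v in Ioi (0 : ℝ), v ^ q * (|v - 1| ^ s - (v + 1) ^ s) ≤ 0 :=
  setIntegral_nonpos measurableSet_Ioi fun _ hv ↦
    rpow_mul_abs_sub_one_rpow_sub_nonpos (le_of_lt hv) hs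

end Integrand

section Sign

variable {α δ : ℝ}

lemma gammaCoef_nonneg_of_lt_of_lt_one (hα : 0 < α) (hδα : δ < α) (hδ1 : δ < 1) :
    0 ≤ gammaCoef α δ := by
  rw [gammaCoef, if_neg hδ1.ne]
  exact mul_nonneg_of_nonpos_of_nonpos (div_nonpos_of_nonpos_of_nonneg (by linarith) hα.le)
    (setIntegral_rpow_mul_abs_sub_one_rpow_sub_nonpos _ (by linarith))

lemma gammaCoef_nonneg_of_le_of_one_le (hα : 0 < α) (hαδ : α ≤ δ) (hδ1 : 1 ≤ δ) :
    0 ≤ gammaCoef α δ := by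
  have hcoef : 0 ≤ if δ = 1 then 1 / α else (δ - 1) / α := by
    split_ifs
    · positivity
    · exact div_nonneg (by linarith) hα.le
  exact mul_nonneg hcoef (setIntegral_rpow_mul_abs_sub_one_rpow_sub_nonneg _ (by linarith))

lemma gammaCoef_nonpos_of_le_of_lt_one (hα : 0 < α) (hαδ : α ≤ δ) (hδ1 : δ < 1) :
    gammaCoef α δ ≤ 0 := by
  rw [gammaCoef, if_neg hδ1.ne]
  exact mul_nonpos_of_nonpos_of_nonneg (div_nonpos_of_nonpos_of_nonneg (by linarith) hα.le)
    (setIntegral_rpow_mul_abs_sub_one_rpow_sub_nonneg _ (by linarith))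

end Sign

/-- For `0 < α < 1`, `γ(α,δ) ≥ 0` for all `δ ∈ (0,α) ∪ [1, α+1)` and
`γ(α,δ) ≤ 0` for all `δ ∈ (α, 1)`. -/
theorem stmt5 (α : ℝ) (hα0 : 0 < α) (hα1 : α < 1) :
    (∀ δ : ℝ, δ ∈ Ioo (0 : ℝ) α ∪ Ico (1 : ℝ) (α + 1) → 0 ≤ gammaCoef α δ) ∧
    (∀ δ : ℝ, δ ∈ Ioo α (1 : ℝ) → gammaCoef α δ ≤ 0) := by
  refine ⟨?_, fun δ ⟨hαδ, hδ1⟩ ↦ gammaCoef_nonpos_of_le_of_lt_one hα0 hαδ.le hδ1⟩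
  rintro δ (⟨-, hδα⟩ | ⟨hδ1, -⟩)
  · exact gammaCoef_nonneg_of_lt_of_lt_one hα0 hδα (hδα.trans hα1)
  · exact gammaCoef_nonneg_of_le_of_one_le hα0 (hα1.le.trans hδ1) hδ1
end

section
/- Let α = 1. Then γ(1,δ) ≥ 0 for every δ ∈ (0,1) ∪ (1,2). -/
open MeasureTheory Set

lemma mul_nonneg_of_nonpos_nonpos_aux {a b : ℝ} (ha : a ≤ 0) (hb : b ≤ 0) : 0 ≤ a * b := by nlinarith

/-- For `α = 1`, `γ(1,δ) ≥ 0` for all `δ ∈ (0,1) ∪ (1,2)`. -/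
theorem stmt6 :
    ∀ δ : ℝ, δ ∈ Ioo (0 : ℝ) 1 ∪ Ioo (1 : ℝ) 2 → 0 ≤ gammaCoef 1 δ := by
  intro δ hδ
  unfold gammaCoef
  have hne1 : ∀ᵐ v ∂(volume.restrict (Ioi (0:ℝ))), v ≠ 1 := by
    refine (ae_iff.2 ?_)
    have : {v : ℝ | ¬ v ≠ 1} = {1} := by ext v; simp
    rw [this]
    exact le_antisymm (le_trans (Measure.restrict_le_self _) (by simp)) zero_le
  have hmem := ae_restrict_mem (μ := volume) (measurableSet_Ioi (a := (0:ℝ)))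
  rcases hδ with h | h
  · -- δ ∈ (0,1): prefactor negative, integrand nonpositive
    rw [if_neg (by linarith [h.2] : δ ≠ 1)]
    apply mul_nonneg_of_nonpos_nonpos_aux
    · apply div_nonpos_of_nonpos_of_nonneg <;> linarith [h.2]
    · apply integral_nonpos_of_ae
      filter_upwards [hmem] with v hv
      have hv0 : (0:ℝ) < v := hv
      apply mul_nonpos_of_nonneg_of_nonpos
      · exact Real.rpow_nonneg hv0.le _
      · have : |v - 1| ^ (1 - δ) ≤ (v + 1) ^ (1 - δ) := by
          apply Real.rpow_le_rpow (abs_nonneg _) _ (by linarith [h.2])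
          rcases abs_cases (v - 1) with ⟨he, _⟩ | ⟨he, _⟩ <;> rw [he] <;> linarith
        linarith
  · -- δ ∈ (1,2): prefactor positive, integrand nonnegative a.e.
    rw [if_neg (by linarith [h.1] : δ ≠ 1)]
    apply mul_nonneg
    · apply div_nonneg <;> linarith [h.1]
    · apply integral_nonneg_of_ae
      filter_upwards [hmem, hne1] with v hv hv1
      have hv0 : (0:ℝ) < v := hv
      apply mul_nonneg (Real.rpow_nonneg hv0.le _)
      have habs : (0:ℝ) < |v - 1| := abs_pos.2 (sub_ne_zero.2 hv1)
      have : (v + 1) ^ (1 - δ) ≤ |v - 1| ^ (1 - δ) := by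
        apply Real.rpow_le_rpow_of_nonpos habs _ (by linarith [h.1])
        rcases abs_cases (v - 1) with ⟨he, _⟩ | ⟨he, _⟩ <;> rw [he] <;> linarith
      linarith
end

section
/- Let β > 0 and let (a_n)_{n≥1} be a sequence of positive real numbers such that a_1 < (1 + 1/β)^{−1/β} and a_{n+1} ≤ a_n − a_n^{1+β}/β for all n ≥ 1. Then a_n ≤ (a_1^{−β} + n − 1)^{−1/β} for all n ≥ 1. -/
/-!
Put `c n = a n ^ (-β)`. Writing the recursion as `a (n+1) ≤ a n * (1 - x)` with
`x = a n ^ β / β`, positivity of `a (n+1)` forces `x < 1`, and Bernoulli's inequality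
`(1 - x) ^ (-β) ≥ 1 + β x` turns it into `c (n+1) ≥ c n * (1 + a n ^ β) = c n + 1`.
Hence `c n ≥ c 1 + n - 1`, which is the claim after taking the `(-1/β)`-th power.
-/

open Real

lemma one_add_mul_le_one_sub_rpow_neg {β x : ℝ} (hβ : 0 ≤ β) (hx : x < 1) :
    1 + β * x ≤ (1 - x) ^ (-β) := by
  have hlog : log (1 - x) ≤ -x := by linarith [log_le_sub_one_of_pos (by linarith : 0 < 1 - x)]
  calc 1 + β * x ≤ exp (β * x) := by linarith [add_one_le_exp (β * x)]
    _ ≤ exp (log (1 - x) * (-β)) := exp_le_exp.mpr (by nlinarith)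
    _ = (1 - x) ^ (-β) := (rpow_def_of_pos (by linarith) _).symm

lemma rpow_neg_add_one_le_of_le_sub {β a b : ℝ} (hβ : 0 < β) (ha : 0 < a) (hb : 0 < b)
    (hab : b ≤ a - a ^ (1 + β) / β) : a ^ (-β) + 1 ≤ b ^ (-β) := by
  set x := a ^ β / β
  have hfactor : a - a ^ (1 + β) / β = a * (1 - x) := by
    rw [rpow_add ha, rpow_one]; ring
  have hx : x < 1 := by
    by_contra! hx
    nlinarith [hfactor ▸ hab]
  have hcancel : a ^ (-β) * (β * x) = 1 := by
    rw [mul_div_cancel₀ _ hβ.ne', ← rpow_add ha, neg_add_cancel, rpow_zero]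
  calc a ^ (-β) + 1 = a ^ (-β) * (1 + β * x) := by rw [mul_add, hcancel, mul_one]
    _ ≤ a ^ (-β) * (1 - x) ^ (-β) :=
      mul_le_mul_of_nonneg_left (one_add_mul_le_one_sub_rpow_neg hβ.le hx) (by positivity)
    _ = (a * (1 - x)) ^ (-β) := (mul_rpow ha.le (by linarith)).symm
    _ ≤ b ^ (-β) := rpow_le_rpow_of_nonpos hb (hfactor ▸ hab) (by linarith)

theorem stmt10_general (β : ℝ) (hβ : 0 < β) (a : ℕ → ℝ)
    (hpos : ∀ n : ℕ, 1 ≤ n → 0 < a n)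
    (hrec : ∀ n : ℕ, 1 ≤ n → a (n + 1) ≤ a n - a n ^ (1 + β) / β) :
    ∀ n : ℕ, 1 ≤ n → a n ≤ (a 1 ^ (-β) + (n : ℝ) - 1) ^ (-1 / β) := by
  have hgrowth : ∀ n : ℕ, 1 ≤ n → a 1 ^ (-β) + (n : ℝ) - 1 ≤ a n ^ (-β) := by
    intro n hn
    induction n, hn using Nat.le_induction with
    | base => simp
    | succ m hm ih =>
      have hstep := rpow_neg_add_one_le_of_le_sub hβ (hpos m hm) (hpos (m + 1) (by omega))
        (hrec m hm)
      push_cast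
      linarith
  intro n hn
  have hn' : (1 : ℝ) ≤ n := by exact_mod_cast hn
  have hc : 0 < a 1 ^ (-β) := rpow_pos_of_pos (hpos 1 le_rfl) _
  rw [show -1 / β = (-β)⁻¹ by rw [neg_div, one_div, inv_neg],
    le_rpow_inv_iff_of_neg (hpos n hn) (by linarith) (by linarith)]
  exact hgrowth n hn

/-- Let `β > 0` and `(a_n)_{n ≥ 1}` be positive reals with
`a_1 < (1 + 1/β)^{-1/β}` and `a_{n+1} ≤ a_n - a_n^{1+β}/β` for all `n ≥ 1`.
Then `a_n ≤ (a_1^{-β} + n - 1)^{-1/β}` for all `n ≥ 1`. -/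
theorem stmt10 (β : ℝ) (hβ : 0 < β) (a : ℕ → ℝ)
    (hpos : ∀ n : ℕ, 1 ≤ n → 0 < a n)
    (ha1 : a 1 < (1 + 1 / β) ^ (-1 / β))
    (hrec : ∀ n : ℕ, 1 ≤ n → a (n + 1) ≤ a n - a n ^ (1 + β) / β) :
    ∀ n : ℕ, 1 ≤ n → a n ≤ (a 1 ^ (-β) + (n : ℝ) - 1) ^ (-1 / β) :=
  stmt10_general β hβ a hpos hrec
end

section
/- Let y > 0, T > 0, and let h₁ : [0,T] → ℝ and h₂ : [0,T] → (0,∞) be functions such that h₂ is differentiable, h₂(0) = y, and h₂'(t) = −2h₂(t)/(h₁(t)² + h₂(t)²) for all t ∈ [0,T]. Then h₂(u) > y/2 for every u ∈ [0,T] with u < 3y²/16. -/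
open Set

/-- Let `y > 0`, `T > 0`, `h₁ : [0,T] → ℝ`, `h₂ : [0,T] → (0,∞)` with `h₂`
differentiable, `h₂(0) = y` and `h₂'(t) = -2h₂(t)/(h₁(t)² + h₂(t)²)` on `[0,T]`.
Then `h₂(u) > y/2` for every `u ∈ [0,T]` with `u < 3y²/16`. -/
theorem stmt14 (y T : ℝ) (hy : 0 < y) (hT : 0 < T) (h₁ h₂ : ℝ → ℝ)
    (hpos : ∀ t ∈ Icc (0 : ℝ) T, 0 < h₂ t)
    (h20 : h₂ 0 = y)
    (hderiv : ∀ t ∈ Icc (0 : ℝ) T,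
      HasDerivWithinAt h₂ (-2 * h₂ t / (h₁ t ^ 2 + h₂ t ^ 2)) (Icc (0 : ℝ) T) t) :
    ∀ u ∈ Icc (0 : ℝ) T, u < 3 * y ^ 2 / 16 → y / 2 < h₂ u := by
  intro u hu hu'
  set g : ℝ → ℝ := fun t => h₂ t ^ 2 + 4 * t with hg
  have hgderiv : ∀ t ∈ Icc (0 : ℝ) T, HasDerivWithinAt g
      (2 * h₂ t * (-2 * h₂ t / (h₁ t ^ 2 + h₂ t ^ 2)) + 4) (Icc (0 : ℝ) T) t := by
    intro t ht
    have h1 := ((hderiv t ht).pow 2)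
    have h2 : HasDerivWithinAt (fun t : ℝ => (4 : ℝ) * t) 4 (Icc (0 : ℝ) T) t :=
      by simpa using ((hasDerivAt_id t).const_mul 4).hasDerivWithinAt (s := Icc (0:ℝ) T)
    have := h1.add h2
    simpa [g, Pi.add_def, Pi.pow_apply, pow_one, mul_comm, mul_assoc, mul_left_comm] using this
  have hmono : MonotoneOn g (Icc (0 : ℝ) T) := by
    apply monotoneOn_of_hasDerivWithinAt_nonneg (convex_Icc 0 T)
      (fun t ht => (hgderiv t ht).continuousWithinAt)
      (f' := fun t => 2 * h₂ t * (-2 * h₂ t / (h₁ t ^ 2 + h₂ t ^ 2)) + 4)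
      (fun t ht => (hgderiv t (interior_subset ht)).mono interior_subset)
    intro t ht
    have ht' : t ∈ Icc (0 : ℝ) T := interior_subset ht
    have hp := hpos t ht'
    have hden : 0 < h₁ t ^ 2 + h₂ t ^ 2 := by positivity
    have key : 2 * h₂ t * (-2 * h₂ t / (h₁ t ^ 2 + h₂ t ^ 2)) = -(4 * h₂ t ^ 2) / (h₁ t ^ 2 + h₂ t ^ 2) := by
      ring
    rw [key]
    have hle : 4 * h₂ t ^ 2 ≤ 4 * (h₁ t ^ 2 + h₂ t ^ 2) := by nlinarith [sq_nonneg (h₁ t)]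
    have hdl : (4 * h₂ t ^ 2) / (h₁ t ^ 2 + h₂ t ^ 2) ≤ 4 := (div_le_iff₀ hden).mpr hle
    have : -(4 * h₂ t ^ 2) / (h₁ t ^ 2 + h₂ t ^ 2) = -((4 * h₂ t ^ 2) / (h₁ t ^ 2 + h₂ t ^ 2)) := by ring
    rw [this]; linarith
  have h0mem : (0 : ℝ) ∈ Icc (0 : ℝ) T := ⟨le_refl 0, hT.le⟩
  have := hmono h0mem hu hu.1
  have hg0 : g 0 = y ^ 2 := by simp [g, h20]
  have hgu : g u = h₂ u ^ 2 + 4 * u := rfl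
  have hsq : (y / 2) ^ 2 < h₂ u ^ 2 := by nlinarith
  have hpu := hpos u hu
  exact lt_of_pow_lt_pow_left₀ 2 hpu.le hsq
end

section
/- Let 1 < α ≤ 2, y > 0, T > 0, and let h₁ : [0,T] → ℝ and h₂ : [0,T] → (0,∞) be functions such that h₂ is differentiable, h₂(0) = y, and h₂'(t) = −2h₂(t)/(h₁(t)² + h₂(t)²)^{α/2} for all t ∈ [0,T]. Then h₂(u) > y/2 for every u ∈ [0,T] with u < y^α/2^{2+α}. -/
/-!
While `h₂ > y/2`, the bound `|h| ≥ h₂` and `α > 1` give `-h₂' ≤ 2 h₂^(1-α) < 2 (y/2)^(1-α) =: C`,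
so by the fencing theorem for right derivatives `h₂` stays above the line `y - C t` as long as that
line stays above `y/2`. Up to time `y^α / 2^(2+α)` the line is above `y - y/4`.
-/

open Set

theorem sub_mul_le_image_of_neg_lt_deriv_right {f f' : ℝ → ℝ} {a b m C : ℝ}
    (hf : ContinuousOn f (Icc a b)) (hf' : ∀ x ∈ Ico a b, HasDerivWithinAt f (f' x) (Ici x) x)
    (hC : 0 ≤ C) (hm : m < f a - C * (b - a)) (bound : ∀ x ∈ Ico a b, m < f x → -C < f' x) :
    ∀ ⦃x⦄, x ∈ Icc a b → f a - C * (x - a) ≤ f x := by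
  have key := image_le_of_deriv_right_lt_deriv_boundary (f := fun t => -f t) (f' := fun t => -f' t)
    (B := fun t => C * (t - a) - f a) (B' := fun _ => C) hf.neg (fun x hx => (hf' x hx).neg)
    (by simp) (fun x => by simpa using ((hasDerivAt_id x).sub_const a).const_mul C)
    fun x hx hfx => by
      have hmx : m < f x := by
        have : C * (x - a) ≤ C * (b - a) := by gcongr; exact hx.2.le
        linarith
      linarith [bound x hx hmx]
  intro x hx
  linarith [key hx]

theorem div_rpow_le_rpow_one_sub {a α : ℝ} (ha : 0 < a) (hα : 0 ≤ α) (b : ℝ) :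
    a / (b ^ 2 + a ^ 2) ^ (α / 2) ≤ a ^ (1 - α) := by
  have hpow : a ^ α ≤ (b ^ 2 + a ^ 2) ^ (α / 2) := by
    calc a ^ α = (a ^ 2) ^ (α / 2) := by
          rw [← Real.rpow_natCast, ← Real.rpow_mul ha.le]; congr 1; push_cast; ring
      _ ≤ (b ^ 2 + a ^ 2) ^ (α / 2) := by gcongr; nlinarith [sq_nonneg b]
  calc a / (b ^ 2 + a ^ 2) ^ (α / 2) ≤ a / a ^ α := by gcongr
    _ = a ^ (1 - α) := by rw [Real.rpow_sub ha, Real.rpow_one]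

theorem two_mul_half_rpow_one_sub_mul_rpow_div (α : ℝ) {y : ℝ} (hy : 0 < y) :
    2 * (y / 2) ^ (1 - α) * (y ^ α / 2 ^ (2 + α)) = y / 4 := by
  rw [Real.div_rpow hy.le zero_le_two, Real.rpow_sub hy, Real.rpow_sub two_pos, Real.rpow_add two_pos]
  have : 0 < y ^ α := by positivity
  have : (0 : ℝ) < 2 ^ α := by positivity
  simp only [Real.rpow_one]
  field_simp
  ring

theorem stmt15_general (α y T : ℝ) (hα1 : 1 < α)
    (hy : 0 < y) (h₁ h₂ : ℝ → ℝ)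
    (hpos : ∀ t ∈ Icc (0 : ℝ) T, 0 < h₂ t)
    (h20 : h₂ 0 = y)
    (hderiv : ∀ t ∈ Icc (0 : ℝ) T,
      HasDerivWithinAt h₂ (-2 * h₂ t / (h₁ t ^ 2 + h₂ t ^ 2) ^ (α / 2)) (Icc (0 : ℝ) T) t) :
    ∀ u ∈ Icc (0 : ℝ) T, u < y ^ α / 2 ^ (2 + α) → y / 2 < h₂ u := by
  intro u hu hu_lt
  set C := 2 * (y / 2) ^ (1 - α)
  have hCu : C * u < y / 4 := by
    rw [← two_mul_half_rpow_one_sub_mul_rpow_div α hy]; gcongr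
  have hsub : Icc 0 u ⊆ Icc 0 T := Icc_subset_Icc_right hu.2
  have hspeed : ∀ x ∈ Ico 0 u, y / 2 < h₂ x →
      -C < -2 * h₂ x / (h₁ x ^ 2 + h₂ x ^ 2) ^ (α / 2) := by
    intro x hx hx_gt
    have hx_pos := hpos x (hsub (Ico_subset_Icc_self hx))
    calc -C < -(2 * h₂ x ^ (1 - α)) :=
          neg_lt_neg (mul_lt_mul_of_pos_left
            (Real.rpow_lt_rpow_of_neg (by positivity) hx_gt (by linarith)) two_pos)
      _ ≤ _ := by
          rw [neg_mul, neg_div, neg_le_neg_iff, mul_div_assoc]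
          gcongr; exact div_rpow_le_rpow_one_sub hx_pos (by linarith) _
  have hlower := sub_mul_le_image_of_neg_lt_deriv_right
    (fun t ht => (hderiv t (hsub ht)).continuousWithinAt.mono hsub)
    (fun x hx => (hderiv x (hsub (Ico_subset_Icc_self hx))).mono_of_mem_nhdsWithin
      (Filter.mem_of_superset (Icc_mem_nhdsGE (hx.2.trans_le hu.2)) (Icc_subset_Icc_left hx.1)))
    (by positivity) (by rw [h20]; linarith) hspeed (right_mem_Icc.2 hu.1)
  rw [h20, sub_zero] at hlower
  linarith

/-- Let `1 < α ≤ 2`, `y > 0`, `T > 0`, `h₁ : [0,T] → ℝ`, `h₂ : [0,T] → (0,∞)`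
with `h₂` differentiable, `h₂(0) = y` and `h₂'(t) = -2h₂(t)/(h₁(t)² + h₂(t)²)^{α/2}` on `[0,T]`.
Then `h₂(u) > y/2` for every `u ∈ [0,T]` with `u < y^α/2^{2+α}`. -/
theorem stmt15 (α y T : ℝ) (hα1 : 1 < α) (hα2 : α ≤ 2)
    (hy : 0 < y) (hT : 0 < T) (h₁ h₂ : ℝ → ℝ)
    (hpos : ∀ t ∈ Icc (0 : ℝ) T, 0 < h₂ t)
    (h20 : h₂ 0 = y)
    (hderiv : ∀ t ∈ Icc (0 : ℝ) T,
      HasDerivWithinAt h₂ (-2 * h₂ t / (h₁ t ^ 2 + h₂ t ^ 2) ^ (α / 2)) (Icc (0 : ℝ) T) t) :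
    ∀ u ∈ Icc (0 : ℝ) T, u < y ^ α / 2 ^ (2 + α) → y / 2 < h₂ u :=
  stmt15_general α y T hα1 hy h₁ h₂ hpos h20 hderiv
end

section
/- Let β > 0, a > 0 and set T = 5a^{2+β}/(4β). Let h₁ : [0,T] → ℝ and h₂ : [0,T] → ℝ be functions such that h₂ is differentiable, h₂(0) = a, h₂'(t) = −2h₂(t)/(h₁(t)² + h₂(t)²) for all t ∈ [0,T], and suppose that a/2 < h₂(t) and |h₁(t)| ≤ a for all t ∈ [0,T]. Then h₂(T) ≤ a − a^{1+β}/β. -/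
open Set

/-- Let `β > 0`, `a > 0`, `T = 5a^{2+β}/(4β)`, and `h₁, h₂ : [0,T] → ℝ` with
`h₂` differentiable, `h₂(0) = a`, `h₂'(t) = -2h₂(t)/(h₁(t)² + h₂(t)²)` on `[0,T]`, and
`a/2 < h₂(t)`, `|h₁(t)| ≤ a` for all `t ∈ [0,T]`. Then `h₂(T) ≤ a - a^{1+β}/β`. -/
theorem stmt16 (β a : ℝ) (hβ : 0 < β) (ha : 0 < a) (h₁ h₂ : ℝ → ℝ)
    (h20 : h₂ 0 = a)
    (hderiv : ∀ t ∈ Icc (0 : ℝ) (5 * a ^ (2 + β) / (4 * β)),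
      HasDerivWithinAt h₂ (-2 * h₂ t / (h₁ t ^ 2 + h₂ t ^ 2))
        (Icc (0 : ℝ) (5 * a ^ (2 + β) / (4 * β))) t)
    (hlow : ∀ t ∈ Icc (0 : ℝ) (5 * a ^ (2 + β) / (4 * β)), a / 2 < h₂ t)
    (hbd : ∀ t ∈ Icc (0 : ℝ) (5 * a ^ (2 + β) / (4 * β)), |h₁ t| ≤ a) :
    h₂ (5 * a ^ (2 + β) / (4 * β)) ≤ a - a ^ (1 + β) / β := by
  set T := 5 * a ^ (2 + β) / (4 * β) with hT
  have hTpos : 0 < T := by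
    have := Real.rpow_pos_of_pos ha (2 + β)
    positivity
  have hmem0 : (0 : ℝ) ∈ Icc (0 : ℝ) T := ⟨le_rfl, hTpos.le⟩
  have hmemT : T ∈ Icc (0 : ℝ) T := ⟨hTpos.le, le_rfl⟩
  have hden : ∀ t ∈ Icc (0 : ℝ) T, 0 < h₁ t ^ 2 + h₂ t ^ 2 := by
    intro t ht
    have := hlow t ht
    nlinarith [sq_nonneg (h₁ t)]
  -- Step 1 : h₂ is antitone, hence h₂ t ≤ a.
  have hanti : AntitoneOn h₂ (Icc 0 T) := by
    apply antitoneOn_of_deriv_nonpos (convex_Icc 0 T)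
    · exact fun t ht => (hderiv t ht).continuousWithinAt
    · intro t ht
      rw [interior_Icc] at ht
      exact (((hderiv t (Ioo_subset_Icc_self ht)).hasDerivAt
        (Icc_mem_nhds ht.1 ht.2)).differentiableAt.differentiableWithinAt)
    · intro t ht
      rw [interior_Icc] at ht
      have ht' := Ioo_subset_Icc_self ht
      rw [((hderiv t ht').hasDerivAt (Icc_mem_nhds ht.1 ht.2)).deriv]
      have h1 := hlow t ht'
      have h2 := hden t ht'
      apply div_nonpos_of_nonpos_of_nonneg <;> nlinarith
  have hub : ∀ t ∈ Icc (0 : ℝ) T, h₂ t ≤ a := by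
    intro t ht
    have := hanti hmem0 ht ht.1
    linarith [h20 ▸ this]
  -- Step 2 : t ↦ h₂ t + (4/(5a)) t is antitone.
  have h5a : (0 : ℝ) < 5 * a := by linarith
  have hkey : AntitoneOn (fun t => h₂ t + 4 / (5 * a) * t) (Icc 0 T) := by
    apply antitoneOn_of_deriv_nonpos (convex_Icc 0 T)
    · exact fun t ht => ((hderiv t ht).continuousWithinAt).add
        (Continuous.continuousWithinAt (by continuity))
    · intro t ht
      rw [interior_Icc] at ht
      exact (((hderiv t (Ioo_subset_Icc_self ht)).hasDerivAt
        (Icc_mem_nhds ht.1 ht.2)).add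
        ((hasDerivAt_id t).const_mul (4 / (5 * a)))).differentiableAt.differentiableWithinAt
    · intro t ht
      rw [interior_Icc] at ht
      have ht' := Ioo_subset_Icc_self ht
      have hd : HasDerivAt (fun t => h₂ t + 4 / (5 * a) * t)
          (-2 * h₂ t / (h₁ t ^ 2 + h₂ t ^ 2) + 4 / (5 * a) * 1) t :=
        (((hderiv t ht').hasDerivAt (Icc_mem_nhds ht.1 ht.2)).add
          ((hasDerivAt_id t).const_mul (4 / (5 * a))))
      rw [hd.deriv]
      have h1 := hlow t ht'
      have h2 := hden t ht'
      have h3 := hub t ht'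
      have h4 := abs_le.mp (hbd t ht')
      have hsq : h₁ t ^ 2 ≤ a ^ 2 := by nlinarith [h4.1, h4.2]
      have hmain : -2 * h₂ t / (h₁ t ^ 2 + h₂ t ^ 2) ≤ -4 / (5 * a) := by
        rw [div_le_div_iff₀ h2 h5a]
        nlinarith [mul_nonneg (by linarith : (0:ℝ) ≤ 2 * h₂ t - a)
          (by linarith : (0:ℝ) ≤ 2 * a - h₂ t)]
      have : (-4 : ℝ) / (5 * a) + 4 / (5 * a) = 0 := by ring
      linarith
  have hfin := hkey hmem0 hmemT hTpos.le
  simp only [mul_zero, add_zero, h20] at hfin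
  -- arithmetic : 4/(5a) * T = a^(1+β)/β
  have hsplit : a ^ (2 + β) = a * a ^ (1 + β) := by
    rw [show (2 : ℝ) + β = 1 + (1 + β) by ring, Real.rpow_add ha, Real.rpow_one]
  have harith : 4 / (5 * a) * T = a ^ (1 + β) / β := by
    rw [hT, hsplit]
    field_simp
  linarith [harith ▸ hfin]
end
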